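/- arXiv:1307.7721 — 5 statements merged into one kernel-verified Lean document; each statement's English description precedes it below -/
import Mathlib

section
/- Let μ be an atomless probability measure on ℝ with finite second moment. Then the set V_μ = {v ∈ L²(μ) : v = F_ν⁻ ∘ F_μ − id μ-a.e. for some ν ∈ W₂(ℝ)} is a closed convex subset of the Hilbert space L²(μ). -/
open MeasureTheory

noncomputable section

/-- `ν` has a finite second moment. -/
def FinSecondMoment (ν : Measure ℝ) : Prop :=
  ∫⁻ x, ENNReal.ofReal (x ^ 2) ∂ν < ⊤

/-- `ν ∈ W₂(ℝ)`: a Borel probability measure on `ℝ` with finite second moment. -/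
def MemW2 (ν : Measure ℝ) : Prop :=
  IsProbabilityMeasure ν ∧ FinSecondMoment ν

/-- `π` is a coupling of `ν₁` and `ν₂`. -/
def IsCoupling (π : Measure (ℝ × ℝ)) (ν₁ ν₂ : Measure ℝ) : Prop :=
  IsProbabilityMeasure π ∧ π.map Prod.fst = ν₁ ∧ π.map Prod.snd = ν₂

/-- The quadratic Wasserstein distance. -/
noncomputable def Wdist (ν₁ ν₂ : Measure ℝ) : ℝ :=
  Real.sqrt (⨅ π : {π : Measure (ℝ × ℝ) // IsCoupling π ν₁ ν₂},
      ∫⁻ p, ENNReal.ofReal ((p.1 - p.2) ^ 2) ∂(π.1)).toReal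

/-- The cumulative distribution function of `ν`. -/
def cdf' (ν : Measure ℝ) (x : ℝ) : ℝ := (ν (Set.Iic x)).toReal

/-- The quantile function of `ν`. -/
noncomputable def quantile (ν : Measure ℝ) (y : ℝ) : ℝ := sInf {x : ℝ | y ≤ cdf' ν x}

/-- The logarithmic map at `μ`: `log_μ(ν) = F_ν⁻ ∘ F_μ - id`. -/
noncomputable def logMap (μ ν : Measure ℝ) : ℝ → ℝ := fun x => quantile ν (cdf' μ x) - x

/-- The exponential map at `μ`: `exp_μ(v) = (id + v) # μ`. -/
noncomputable def expMap (μ : Measure ℝ) (v : ℝ → ℝ) : Measure ℝ := μ.map fun x => x + v x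

/-- `μ` is atomless. -/
def Atomless (μ : Measure ℝ) : Prop := ∀ x : ℝ, μ {x} = 0


/-- `V_μ = log_μ(W₂(ℝ))`, as a subset of `L²(μ)`. -/
def Vmu (μ : Measure ℝ) : Set (Lp ℝ 2 μ) :=
  {v | ∃ ν : Measure ℝ, MemW2 ν ∧ ⇑v =ᵐ[μ] logMap μ ν}

/-! A function `v ∈ L²(μ)` lies in `V_μ` iff `v + id` is monotone on a `μ`-conull set.
Indeed `F_ν⁻ ∘ F_μ` is monotone where `0 < F_μ < 1`, which is `μ`-a.e. since `μ` is atomless;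
conversely, if `g = v + id` is a.e. monotone then `ν = g_# μ ∈ W₂(ℝ)` and `F_ν⁻ ∘ F_μ = g` a.e.
Being a.e. monotone is stable under convex combinations and, passing to an a.e. convergent
subsequence, under `L²` limits. -/

open Filter Set Topology
open scoped ENNReal

section NullSets

variable {α : Type*} [LinearOrder α] [DenselyOrdered α] [TopologicalSpace α] [OrderTopology α]
  [TopologicalSpace.SeparableSpace α] [MeasurableSpace α] {μ : Measure α}

theorem measure_eq_zero_of_forall_measure_inter_Iic_eq_zero {C : Set α}
    (h : ∀ x ∈ C, μ (C ∩ Iic x) = 0) : μ C = 0 := by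
  by_cases hmax : ∃ m ∈ C, C ⊆ Iic m
  · obtain ⟨m, hm, hCm⟩ := hmax
    simpa [inter_eq_left.2 hCm] using h m hm
  push Not at hmax
  obtain ⟨D, hDc, hD⟩ := TopologicalSpace.exists_countable_dense α
  have : Countable D := hDc.to_subtype
  have hcover : C ⊆ ⋃ d : {d : D | ∃ c ∈ C, (d : α) ≤ c}, C ∩ Iio (d : α) := by
    intro x hx
    obtain ⟨c, hc, hxc⟩ := not_subset.1 (hmax x hx)
    obtain ⟨d, hdD, hxd, hdc⟩ := hD.exists_between (not_le.1 hxc)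
    exact mem_iUnion.2 ⟨⟨⟨d, hdD⟩, c, hc, hdc.le⟩, hx, hxd⟩
  refine measure_mono_null hcover (measure_iUnion_null fun ⟨d, c, hc, hdc⟩ => ?_)
  exact measure_mono_null (inter_subset_inter_right _ fun y hy => (le_of_lt hy).trans hdc) (h c hc)

theorem ae_mem_imp_measure_inter_Iic_pos (A : Set α) :
    ∀ᵐ x ∂μ, x ∈ A → 0 < μ (A ∩ Iic x) := by
  simp only [ae_iff, Classical.not_imp, pos_iff_ne_zero, not_not]
  refine measure_eq_zero_of_forall_measure_inter_Iic_eq_zero fun x hx => ?_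
  exact measure_mono_null (inter_subset_inter_left _ fun y hy => hy.1) hx.2

theorem ae_mem_imp_measure_inter_Ici_pos (A : Set α) :
    ∀ᵐ x ∂μ, x ∈ A → 0 < μ (A ∩ Ici x) :=
  ae_mem_imp_measure_inter_Iic_pos (α := αᵒᵈ) (μ := μ) A

theorem ae_measure_Iic_pos : ∀ᵐ x ∂μ, 0 < μ (Iic x) := by
  filter_upwards [ae_mem_imp_measure_inter_Iic_pos (μ := μ) univ] with x hx
  simpa using hx (mem_univ x)

theorem ae_measure_Ioi_pos [NullSingletonClass μ] : ∀ᵐ x ∂μ, 0 < μ (Ioi x) := by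
  filter_upwards [ae_mem_imp_measure_inter_Ici_pos (μ := μ) univ] with x hx
  simpa [measure_congr Ioi_ae_eq_Ici] using hx (mem_univ x)

end NullSets

section Quantile

variable {ν : Measure ℝ} [IsProbabilityMeasure ν] {y : ℝ}

theorem cdf'_eq_cdf : cdf' ν = ProbabilityTheory.cdf ν :=
  funext fun x => (ProbabilityTheory.cdf_eq_real ν x).symm

theorem monotone_cdf' : Monotone (cdf' ν) :=
  cdf'_eq_cdf (ν := ν) ▸ (ProbabilityTheory.cdf ν).mono

theorem bddBelow_setOf_le_cdf' (hy : 0 < y) : BddBelow {x | y ≤ cdf' ν x} := by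
  obtain ⟨b, hb⟩ :=
    ((ProbabilityTheory.tendsto_cdf_atBot ν).eventually_lt_const hy).exists_forall_of_atBot
  refine ⟨b, fun x hx => le_of_not_ge fun hxb => (hb x hxb).not_ge ?_⟩
  rwa [← cdf'_eq_cdf]

theorem nonempty_setOf_le_cdf' (hy : y < 1) : {x | y ≤ cdf' ν x}.Nonempty := by
  obtain ⟨x, hx⟩ := ((ProbabilityTheory.tendsto_cdf_atTop ν).eventually_const_lt hy).exists
  exact ⟨x, cdf'_eq_cdf (ν := ν) ▸ hx.le⟩

theorem quantile_le {z : ℝ} (hy : 0 < y) (h : y ≤ cdf' ν z) : quantile ν y ≤ z :=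
  csInf_le (bddBelow_setOf_le_cdf' hy) h

theorem monotoneOn_quantile : MonotoneOn (quantile ν) (Ioo 0 1) := fun _ hy₁ _ hy₂ h =>
  csInf_le_csInf (bddBelow_setOf_le_cdf' hy₁.1) (nonempty_setOf_le_cdf' hy₂.2)
    fun _ hx => h.trans hx

end Quantile

def MonotoneAE {α : Type*} [Preorder α] [MeasurableSpace α] (μ : Measure α) (f : α → ℝ) : Prop :=
  ∃ s ∈ ae μ, MonotoneOn f s

namespace MonotoneAE

variable {α : Type*} [Preorder α] [MeasurableSpace α] {μ : Measure α} {f g : α → ℝ}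

theorem congr (hf : MonotoneAE μ f) (h : f =ᵐ[μ] g) : MonotoneAE μ g := by
  obtain ⟨s, hs, hfs⟩ := hf
  refine ⟨s ∩ {x | f x = g x}, inter_mem hs h, fun x hx y hy hxy => ?_⟩
  rw [← hx.2, ← hy.2]
  exact hfs hx.1 hy.1 hxy

theorem add (hf : MonotoneAE μ f) (hg : MonotoneAE μ g) : MonotoneAE μ (f + g) := by
  obtain ⟨s, hs, hfs⟩ := hf
  obtain ⟨t, ht, hgt⟩ := hg
  exact ⟨s ∩ t, inter_mem hs ht, (hfs.mono inter_subset_left).add (hgt.mono inter_subset_right)⟩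

theorem const_smul (hf : MonotoneAE μ f) {c : ℝ} (hc : 0 ≤ c) : MonotoneAE μ (c • f) := by
  obtain ⟨s, hs, hfs⟩ := hf
  exact ⟨s, hs, fun x hx y hy hxy => smul_le_smul_of_nonneg_left (hfs hx hy hxy) hc⟩

theorem of_tendsto {f : ℕ → α → ℝ} (hf : ∀ n, MonotoneAE μ (f n))
    (hlim : ∀ᵐ x ∂μ, Tendsto (fun n => f n x) atTop (𝓝 (g x))) : MonotoneAE μ g := by
  choose s hs hfs using hf
  refine ⟨(⋂ n, s n) ∩ {x | Tendsto (fun n => f n x) atTop (𝓝 (g x))},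
    inter_mem (countable_iInter_mem.2 hs) hlim, fun x hx y hy hxy => ?_⟩
  simp only [mem_inter_iff, mem_iInter] at hx hy
  exact le_of_tendsto_of_tendsto' hx.2 hy.2 fun n => hfs n (hx.1 n) (hy.1 n) hxy

end MonotoneAE

section Lp

variable {α : Type*} [Preorder α] [MeasurableSpace α] {μ : Measure α} {p : ℝ≥0∞}

theorem convex_setOf_monotoneAE_add (φ : α → ℝ) :
    Convex ℝ {v : Lp ℝ p μ | MonotoneAE μ (⇑v + φ)} := by
  intro v hv w hw a b ha hb hab
  refine ((hv.const_smul ha).add (hw.const_smul hb)).congr ?_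
  filter_upwards [Lp.coeFn_add (a • v) (b • w), Lp.coeFn_smul a v, Lp.coeFn_smul b w]
    with x hsum hav hbw
  simp only [Pi.add_apply, Pi.smul_apply, smul_eq_mul, hsum, hav, hbw]
  linear_combination φ x * hab

theorem isClosed_setOf_monotoneAE_add [Fact (1 ≤ p)] (φ : α → ℝ) :
    IsClosed {v : Lp ℝ p μ | MonotoneAE μ (⇑v + φ)} := by
  refine IsSeqClosed.isClosed fun v w hv hvw => ?_
  obtain ⟨ns, -, hlim⟩ := (tendstoInMeasure_of_tendsto_Lp hvw).exists_seq_tendsto_ae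
  refine MonotoneAE.of_tendsto (fun n => hv (ns n)) ?_
  filter_upwards [hlim] with x hx
  exact hx.add tendsto_const_nhds

end Lp

section Rearrangement

variable {μ : Measure ℝ} [IsProbabilityMeasure μ] {g : ℝ → ℝ} {s : Set ℝ}

theorem cdf'_mem_Ioo {x : ℝ} (h₀ : 0 < μ (Iic x)) (h₁ : 0 < μ (Ioi x)) :
    cdf' μ x ∈ Ioo 0 1 := by
  refine ⟨ENNReal.toReal_pos h₀.ne' (measure_ne_top _ _), ?_⟩
  have hlt : μ (Iic x) < 1 := by
    rw [← compl_Ioi, prob_compl_eq_one_sub measurableSet_Ioi]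
    exact ENNReal.sub_lt_self ENNReal.one_ne_top one_ne_zero h₁.ne'
  simpa [cdf'] using (ENNReal.toReal_lt_toReal (measure_ne_top _ _) ENNReal.one_ne_top).2 hlt

theorem monotoneAE_quantile_cdf' [NullSingletonClass μ] (ν : Measure ℝ) [IsProbabilityMeasure ν] :
    MonotoneAE μ fun x => quantile ν (cdf' μ x) :=
  ⟨{x | 0 < μ (Iic x) ∧ 0 < μ (Ioi x)}, ae_measure_Iic_pos.and ae_measure_Ioi_pos,
    fun _ hx _ hy hxy => monotoneOn_quantile (cdf'_mem_Ioo hx.1 hx.2) (cdf'_mem_Ioo hy.1 hy.2)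
      (monotone_cdf' hxy)⟩

theorem cdf'_le_cdf'_map (hg : Measurable g) (hs : s ∈ ae μ) (hgs : MonotoneOn g s) {x : ℝ}
    (hx : x ∈ s) : cdf' μ x ≤ cdf' (μ.map g) (g x) := by
  refine ENNReal.toReal_mono (measure_ne_top _ _) ?_
  calc μ (Iic x) = μ (Iic x ∩ s) := (measure_inter_conull (mem_ae_iff.1 hs)).symm
    _ ≤ μ.map g (Iic (g x)) := by
      rw [Measure.map_apply hg measurableSet_Iic]
      exact measure_mono fun w hw => hgs hw.2 hx hw.1

theorem ae_le_quantile_map_cdf' (hg : Measurable g) (hs : s ∈ ae μ) (hgs : MonotoneOn g s) :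
    ∀ᵐ x ∂μ, g x ≤ quantile (μ.map g) (cdf' μ x) := by
  have hpos (q : ℚ) : ∀ᵐ x ∂μ, x ∈ g ⁻¹' Ioi (q : ℝ) → 0 < μ (g ⁻¹' Ioi (q : ℝ) ∩ Iic x) :=
    ae_mem_imp_measure_inter_Iic_pos _
  filter_upwards [hs, ae_all_iff.2 hpos] with x hxs hx
  refine le_csInf ⟨g x, cdf'_le_cdf'_map hg hs hgs hxs⟩ fun z hz => le_of_not_gt fun hzx => ?_
  obtain ⟨q, hzq, hqx⟩ := exists_rat_btwn hzx
  -- `F_ν(z) ≥ F_μ(x)` forces `μ`-almost all of `Iic x` into `{g ≤ q}`, so `x` is one of the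
  -- `μ`-null set of points of `{q < g}` carrying no mass of `{q < g}` to their left.
  have hmeas : MeasurableSet (g ⁻¹' Iic (q : ℝ)) := hg measurableSet_Iic
  have hle : μ (Iic x) ≤ μ (Iic x ∩ g ⁻¹' Iic (q : ℝ)) := calc
    μ (Iic x) ≤ μ (g ⁻¹' Iic z) := by
      rw [← Measure.map_apply hg measurableSet_Iic]
      exact (ENNReal.toReal_le_toReal (measure_ne_top _ _) (measure_ne_top _ _)).1 hz
    _ ≤ μ (g ⁻¹' Iic (q : ℝ) ∩ s) := by
      rw [measure_inter_conull (mem_ae_iff.1 hs)]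
      exact measure_mono (preimage_mono (Iic_subset_Iic.2 hzq.le))
    _ ≤ μ (Iic x ∩ g ⁻¹' Iic (q : ℝ)) := measure_mono fun w hw =>
      ⟨le_of_not_gt fun hxw => ((hgs hxs hw.2 hxw.le).trans hw.1).not_gt hqx, hw.1⟩
  have hnull : μ (Iic x \ g ⁻¹' Iic (q : ℝ)) = 0 := by
    have hfin := measure_ne_top μ (Iic x ∩ g ⁻¹' Iic (q : ℝ))
    refine nonpos_iff_eq_zero.1 ((ENNReal.add_le_add_iff_left hfin).1 ?_)
    rwa [add_zero, measure_inter_add_sdiff (Iic x) hmeas]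
  refine (hx q hqx).ne' (measure_mono_null ?_ hnull)
  exact fun w hw => ⟨hw.2, not_le.2 (mem_preimage.1 hw.1)⟩

theorem quantile_map_cdf'_ae_eq (hg : Measurable g) (hmono : MonotoneAE μ g) :
    (fun x => quantile (μ.map g) (cdf' μ x)) =ᵐ[μ] g := by
  obtain ⟨s, hs, hgs⟩ := hmono
  have := Measure.isProbabilityMeasure_map (μ := μ) hg.aemeasurable
  filter_upwards [hs, ae_measure_Iic_pos, ae_le_quantile_map_cdf' hg hs hgs] with x hxs hx₀ hx
  exact le_antisymm (quantile_le (ENNReal.toReal_pos hx₀.ne' (measure_ne_top _ _))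
    (cdf'_le_cdf'_map hg hs hgs hxs)) hx

end Rearrangement

theorem finSecondMoment_iff_memLp {ν : Measure ℝ} : FinSecondMoment ν ↔ MemLp id 2 ν := by
  rw [memLp_two_iff_integrable_sq aestronglyMeasurable_id, Integrable,
    hasFiniteIntegral_iff_ofReal (ae_of_all _ fun x => sq_nonneg (id x))]
  exact (and_iff_right (by fun_prop)).symm

theorem Vmu_eq {μ : Measure ℝ} [IsProbabilityMeasure μ] [NullSingletonClass μ]
    (hμ2 : FinSecondMoment μ) : Vmu μ = {v : Lp ℝ 2 μ | MonotoneAE μ (⇑v + id)} := by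
  ext v
  constructor
  · rintro ⟨ν, ⟨hν, -⟩, hv⟩
    refine (monotoneAE_quantile_cdf' ν).congr ?_
    filter_upwards [hv] with x hx
    simp [hx, logMap]
  · intro hv
    have hg : Measurable (⇑v + id) := (Lp.stronglyMeasurable v).measurable.add measurable_id
    have hmem : MemLp id 2 (μ.map (⇑v + id)) :=
      (memLp_map_measure_iff aestronglyMeasurable_id hg.aemeasurable).2
        ((Lp.memLp v).add (finSecondMoment_iff_memLp.1 hμ2))
    refine ⟨μ.map (⇑v + id), ⟨Measure.isProbabilityMeasure_map hg.aemeasurable,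
      finSecondMoment_iff_memLp.2 hmem⟩, ?_⟩
    filter_upwards [quantile_map_cdf'_ae_eq hg hv] with x hx
    simp [logMap, hx]

/-- `V_μ = log_μ(W₂(ℝ))` is a closed convex subset of the Hilbert space `L²(μ)`. -/
theorem Vmu_isClosed_convex (μ : Measure ℝ) (hμp : IsProbabilityMeasure μ)
    (hμa : Atomless μ) (hμ2 : FinSecondMoment μ) :
    IsClosed (Vmu μ) ∧ Convex ℝ (Vmu μ) := by
  have : NullSingletonClass μ := ⟨hμa⟩
  rw [Vmu_eq hμ2]
  exact ⟨isClosed_setOf_monotoneAE_add id, convex_setOf_monotoneAE_add id⟩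
end
end

section
/- Let H be a separable real Hilbert space, X ⊆ H a compact convex set, x₀ ∈ X, and k ≥ 1 an integer. Then the family CC_k(X) of nonempty closed convex subsets C ⊆ X with dim(C) ≤ k, and the subfamily CC_{x₀,k}(X) of those C ∈ CC_k(X) that contain x₀, are both compact subsets of the space CL(X) of nonempty closed subsets of X endowed with the Hausdorff distance. -/
/-!
The Hausdorff metric on nonempty compact sets induces the Vietoris topology, in which the nonempty
compact subsets of a compact set form a compact set. It therefore suffices that being convex,
having dimension at most `k` and containing `x₀` are closed conditions. The failure of each is
witnessed by finitely many points of `K` satisfying an open condition jointly with `K` (a convex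
combination outside `K`, or `k + 2` affinely independent points), and such witnesses survive
small Vietoris perturbations of `K`.
-/

open MeasureTheory TopologicalSpace

noncomputable section

/-- `dim(C) ≤ k`: the smallest affine subspace containing `C` has dimension at most `k`. -/
def DimLE {H : Type*} [NormedAddCommGroup H] [InnerProductSpace ℝ H]
    (C : Set H) (k : ℕ) : Prop :=
  Module.rank ℝ (affineSpan ℝ C).direction ≤ (k : Cardinal)

open Set

namespace TopologicalSpace.NonemptyCompacts

variable {α : Type*} [TopologicalSpace α]

theorem isClosed_setOf_mem [T2Space α] :
    IsClosed {q : α × NonemptyCompacts α | q.1 ∈ (q.2 : Set α)} := by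
  have hcont :
      Continuous fun q : α × NonemptyCompacts α => (q.2, ({q.1} : NonemptyCompacts α)) :=
    continuous_snd.prodMk (continuous_singleton.comp continuous_fst)
  rw [← isOpen_compl_iff]
  convert isOpen_setOfPred_disjoint_coe.preimage hcont using 1
  ext q
  simp

theorem isOpen_setOf_exists_forall_mem {ι : Type*} [Finite ι]
    {W : Set ((ι → α) × NonemptyCompacts α)} (hW : IsOpen W) :
    IsOpen {K : NonemptyCompacts α |
      ∃ p : ι → α, (∀ i, p i ∈ (K : Set α)) ∧ (p, K) ∈ W} := by
  refine isOpen_iff_forall_mem_open.2 fun K ⟨p, hpK, hpW⟩ => ?_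
  obtain ⟨U, 𝒱, hU, h𝒱, hpU, hK𝒱, hUW⟩ := isOpen_prod_iff.1 hW p K hpW
  obtain ⟨u, hu, huU⟩ := isOpen_pi_iff'.1 hU p hpU
  refine ⟨𝒱 ∩ ⋂ i, {L | ((L : Set α) ∩ u i).Nonempty}, fun L ⟨hL𝒱, hLu⟩ => ?_,
    h𝒱.inter (isOpen_iInter_of_finite fun i => isOpen_inter_nonempty_of_isOpen (hu i).1),
    hK𝒱, mem_iInter.2 fun i => ⟨p i, hpK i, (hu i).2⟩⟩
  choose q hqL hqu using mem_iInter.1 hLu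
  exact ⟨q, hqL, hUW ⟨huU fun i _ => hqu i, hL𝒱⟩⟩

theorem isClosed_setOf_forall_mem_forall_mem [T2Space α] {f : α → α → α}
    (hf : Continuous (Function.uncurry f)) :
    IsClosed {K : NonemptyCompacts α |
      ∀ x ∈ (K : Set α), ∀ y ∈ (K : Set α), f x y ∈ (K : Set α)} := by
  have hcont :
      Continuous fun q : (Fin 2 → α) × NonemptyCompacts α => (f (q.1 0) (q.1 1), q.2) := by
    fun_prop
  have hW :
      IsOpen {q : (Fin 2 → α) × NonemptyCompacts α | f (q.1 0) (q.1 1) ∉ (q.2 : Set α)} :=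
    (isClosed_setOf_mem.preimage hcont).isOpen_compl
  rw [← isOpen_compl_iff]
  convert isOpen_setOf_exists_forall_mem hW using 1
  ext K
  simp [Fin.exists_fin_succ_pi, Fin.forall_fin_two, and_assoc]

theorem isClosed_setOf_convex {𝕜 E : Type*} [Semiring 𝕜] [PartialOrder 𝕜] [AddCommMonoid E]
    [Module 𝕜 E] [TopologicalSpace E] [ContinuousAdd E] [ContinuousConstSMul 𝕜 E]
    [T2Space E] :
    IsClosed {K : NonemptyCompacts E | Convex 𝕜 (K : Set E)} := by
  have hconv : {K : NonemptyCompacts E | Convex 𝕜 (K : Set E)} =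
      ⋂ (a : 𝕜) (b : 𝕜) (_ : 0 ≤ a ∧ 0 ≤ b ∧ a + b = 1),
        {K : NonemptyCompacts E |
          ∀ x ∈ (K : Set E), ∀ y ∈ (K : Set E), a • x + b • y ∈ (K : Set E)} := by
    ext K
    simp only [mem_iInter, mem_ofPred_eq, Convex, StarConvex]
    exact ⟨fun h a b hab x hx y hy => h hx hy hab.1 hab.2.1 hab.2.2,
      fun h x hx y hy a b ha hb hab => h a b ⟨ha, hb, hab⟩ x hx y hy⟩
  rw [hconv]
  exact isClosed_iInter fun a => isClosed_iInter fun b => isClosed_iInter fun _ =>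
    isClosed_setOf_forall_mem_forall_mem (by fun_prop)

end TopologicalSpace.NonemptyCompacts

section Dimension

variable {H : Type*} [NormedAddCommGroup H] [InnerProductSpace ℝ H]

theorem dimLE_iff_forall_not_affineIndependent {C : Set H} {k : ℕ} :
    DimLE C k ↔ ∀ p : Fin (k + 2) → H, (∀ i, p i ∈ C) → ¬AffineIndependent ℝ p := by
  refine ⟨fun h p hpC hp => ?_, fun h => ?_⟩
  · have hle : vectorSpan ℝ (range p) ≤ (affineSpan ℝ C).direction := by
      rw [direction_affineSpan]
      exact vectorSpan_mono ℝ (range_subset_iff.2 hpC)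
    have := (Submodule.rank_mono hle).trans h
    rw [← Module.finrank_eq_rank, hp.finrank_vectorSpan (Fintype.card_fin _)] at this
    exact absurd (Nat.cast_le.1 this) (by omega)
  · obtain ⟨t, htC, hspan, ht⟩ := exists_affineIndependent ℝ H C
    have hfin : t.Finite := by
      by_contra hinf
      let e : Fin (k + 2) ↪ t := Fin.valEmbedding.trans (Set.Infinite.natEmbedding t hinf)
      exact h _ (fun i => htC (e i).2) (ht.comp_embedding e)
    have := hfin.fintype
    have hcard : Fintype.card t ≤ k + 1 := by
      by_contra hlt
      obtain ⟨e⟩ : Nonempty (Fin (k + 2) ↪ t) :=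
        Function.Embedding.nonempty_of_card_le (by rw [Fintype.card_fin]; omega)
      exact h _ (fun i => htC (e i).2) (ht.comp_embedding e)
    have := finiteDimensional_vectorSpan_of_finite ℝ hfin
    rw [DimLE, ← hspan, direction_affineSpan, ← Module.finrank_eq_rank, Nat.cast_le]
    obtain rfl | ⟨x, hx⟩ := t.eq_empty_or_nonempty
    · rw [vectorSpan_empty, finrank_bot]
      exact Nat.zero_le k
    have : Nonempty t := ⟨⟨x, hx⟩⟩
    have hrank := finrank_vectorSpan_range_add_one_le ℝ ((↑) : t → H)
    rw [Subtype.range_coe] at hrank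
    exact Nat.le_of_succ_le_succ (hrank.trans hcard)

theorem isClosed_setOf_dimLE (k : ℕ) :
    IsClosed {K : NonemptyCompacts H | DimLE (K : Set H) k} := by
  have hW : IsOpen {q : (Fin (k + 2) → H) × NonemptyCompacts H | AffineIndependent ℝ q.1} :=
    isOpen_setOfPred_affineIndependent.preimage continuous_fst
  rw [← isOpen_compl_iff]
  convert NonemptyCompacts.isOpen_setOf_exists_forall_mem hW using 1
  ext K
  simp [dimLE_iff_forall_not_affineIndependent]

end Dimension

theorem CCk_compact_general
    {H : Type*} [NormedAddCommGroup H] [InnerProductSpace ℝ H]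
    (X : Set H) (hXc : IsCompact X)
    (x₀ : H) (k : ℕ) :
    IsCompact {C : {C : NonemptyCompacts H // (C : Set H) ⊆ X} |
        Convex ℝ (C.1 : Set H) ∧ DimLE (C.1 : Set H) k} ∧
    IsCompact {C : {C : NonemptyCompacts H // (C : Set H) ⊆ X} |
        Convex ℝ (C.1 : Set H) ∧ DimLE (C.1 : Set H) k ∧ x₀ ∈ (C.1 : Set H)} := by
  have : CompactSpace {C : NonemptyCompacts H // (C : Set H) ⊆ X} :=
    isCompact_iff_compactSpace.mp (NonemptyCompacts.isCompact_subsets_of_isCompact hXc)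
  have hval : Continuous (Subtype.val : {C : NonemptyCompacts H // (C : Set H) ⊆ X} → _) :=
    continuous_subtype_val
  have hconv := (NonemptyCompacts.isClosed_setOf_convex (𝕜 := ℝ)).preimage hval
  have hdim := (isClosed_setOf_dimLE k).preimage hval
  have hmem :=
    NonemptyCompacts.isClosed_setOf_mem.preimage ((continuous_const (y := x₀)).prodMk hval)
  exact ⟨(hconv.inter hdim).isCompact, (hconv.inter (hdim.inter hmem)).isCompact⟩

/-- For a compact convex subset `X` of a separable Hilbert space, the family
`CC_k(X)` of nonempty closed convex subsets of `X` of dimension at most `k`, and the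
subfamily `CC_{x₀,k}(X)` of its members containing `x₀`, are compact subsets of the
space of nonempty closed subsets of `X` with the Hausdorff distance. -/
theorem CCk_compact
    {H : Type*} [NormedAddCommGroup H] [InnerProductSpace ℝ H] [CompleteSpace H]
    [SecondCountableTopology H]
    (X : Set H) (hXc : IsCompact X) (hXconv : Convex ℝ X)
    (x₀ : H) (hx₀ : x₀ ∈ X) (k : ℕ) (hk : 1 ≤ k) :
    IsCompact {C : {C : NonemptyCompacts H // (C : Set H) ⊆ X} |
        Convex ℝ (C.1 : Set H) ∧ DimLE (C.1 : Set H) k} ∧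
    IsCompact {C : {C : NonemptyCompacts H // (C : Set H) ⊆ X} |
        Convex ℝ (C.1 : Set H) ∧ DimLE (C.1 : Set H) k ∧ x₀ ∈ (C.1 : Set H)} :=
  CCk_compact_general X hXc x₀ k
end
end

section
/- Let H be a separable real Hilbert space with dim H ≥ k, X ⊆ H a closed convex set, x₀ ∈ X, and P a Borel probability measure on H with P(X) = 1 and ∫ ‖x‖² dP(x) < ∞. For an orthonormal family U = {u₁,…,u_k} ⊆ H set C_U = (x₀ + span(U)) ∩ X and H_X(U) = K_X(C_U), where K_X(C) = ∫ d(x, C)² dP(x). If U* = {u*₁,…,u*_k} is an orthonormal family minimizing H_X over all orthonormal families of cardinality k, then C_{U*} minimizes K_X over CC_{x₀,k}(X), i.e. C_{U*} is a (k, x₀)-global principal convex component. -/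
/-!
Given `C ∈ CC_{x₀,k}(X)`, the direction of the affine span of `C` has dimension at most
`k ≤ dim H`, so it lies in the span of some orthonormal family `w` of size `k` (extend a basis to
`k` independent vectors and apply Gram–Schmidt). As `x₀ ∈ C ⊆ X`, this gives `C ⊆ C_w`, hence
`d(x, C_w) ≤ d(x, C)` pointwise, and `K_X(C_{U*}) ≤ K_X(C_w) ≤ K_X(C)` by minimality of `U*`.
The finite second moment makes `d(·, C)²` integrable, since `d(x, C) ≤ ‖x - x₀‖`.
-/

open MeasureTheory

noncomputable section

/-- `C ∈ CC_{x₀,k}(X)`: `C` is a nonempty closed convex subset of `X` containing `x₀`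
with `dim(C) ≤ k`. -/
def MemCC {H : Type*} [NormedAddCommGroup H] [InnerProductSpace ℝ H]
    (X : Set H) (x₀ : H) (k : ℕ) (C : Set H) : Prop :=
  C.Nonempty ∧ IsClosed C ∧ C ⊆ X ∧ Convex ℝ C ∧ x₀ ∈ C ∧ DimLE C k

/-- `C_U = (x₀ + span U) ∩ X` for a family `U = (u i)`. -/
def CU {H : Type*} [NormedAddCommGroup H] [InnerProductSpace ℝ H]
    (X : Set H) (x₀ : H) {k : ℕ} (u : Fin k → H) : Set H :=
  ((fun z => x₀ + z) '' (Submodule.span ℝ (Set.range u) : Set H)) ∩ X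

open Submodule

theorem exists_linearIndependent_span_ge_of_le_rank {R M : Type*} [DivisionRing R]
    [AddCommGroup M] [Module R M] {n k : ℕ} (hnk : n ≤ k) (hk : (k : Cardinal) ≤ Module.rank R M)
    {f : Fin n → M} (hf : LinearIndependent R f) :
    ∃ g : Fin k → M, LinearIndependent R g ∧ span R (Set.range f) ≤ span R (Set.range g) := by
  induction k, hnk using Nat.le_induction with
  | base => exact ⟨f, hf, le_rfl⟩
  | succ m _ ih =>
    obtain ⟨g, hg, hfg⟩ := ih (le_trans (by norm_cast; omega) hk)
    obtain ⟨x, hx⟩ := exists_linearIndependent_snoc_of_lt_rank hg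
      (lt_of_lt_of_le (by norm_cast; omega) hk)
    refine ⟨Fin.snoc g x, hx, hfg.trans (span_mono ?_)⟩
    rintro _ ⟨i, rfl⟩
    exact ⟨i.castSucc, Fin.snoc_castSucc ..⟩

theorem Submodule.exists_orthonormal_span_ge_of_rank_le {𝕜 E : Type*} [RCLike 𝕜]
    [NormedAddCommGroup E] [InnerProductSpace 𝕜 E] {k : ℕ}
    (hk : (k : Cardinal) ≤ Module.rank 𝕜 E) (V : Submodule 𝕜 E)
    (hV : Module.rank 𝕜 V ≤ k) :
    ∃ w : Fin k → E, Orthonormal 𝕜 w ∧ V ≤ span 𝕜 (Set.range w) := by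
  have : FiniteDimensional 𝕜 V :=
    Module.rank_lt_aleph0_iff.mp (hV.trans_lt (Cardinal.natCast_lt_aleph0))
  let b := Module.finBasis 𝕜 V
  have hspan : span 𝕜 (Set.range (V.subtype ∘ b)) = V := by
    rw [Set.range_comp, ← map_span, b.span_eq, map_subtype_top]
  obtain ⟨g, hg, hbg⟩ := exists_linearIndependent_span_ge_of_le_rank
    (Module.finrank_le_of_rank_le hV) hk (b.linearIndependent.map' V.subtype V.ker_subtype)
  refine ⟨InnerProductSpace.gramSchmidtNormed 𝕜 g,
    InnerProductSpace.gramSchmidtNormed_orthonormal hg, ?_⟩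
  rw [InnerProductSpace.span_gramSchmidtNormed_range, InnerProductSpace.span_gramSchmidt]
  exact hspan.ge.trans hbg

theorem memLp_two_id_of_lintegral_nnnorm_sq_lt_top {E : Type*} [NormedAddCommGroup E]
    [SecondCountableTopology E] [MeasurableSpace E] [OpensMeasurableSpace E] {μ : Measure E}
    (h : ∫⁻ x, ‖x‖₊ ^ 2 ∂μ < ⊤) : MemLp id 2 μ := by
  refine ⟨aestronglyMeasurable_id, ?_⟩
  rw [eLpNorm_lt_top_iff_lintegral_rpow_enorm_lt_top two_ne_zero ENNReal.ofNat_ne_top]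
  simpa [enorm_eq_nnnorm] using h

theorem MeasureTheory.MemLp.integrable_infDist_sq {E : Type*} [NormedAddCommGroup E]
    [MeasurableSpace E] [OpensMeasurableSpace E] {μ : Measure E} [IsFiniteMeasure μ]
    (h : MemLp id 2 μ) {C : Set E} {c : E} (hc : c ∈ C) :
    Integrable (fun x => Metric.infDist x C ^ 2) μ := by
  refine MemLp.integrable_sq ((h.sub (memLp_const c)).mono
    (Metric.continuous_infDist_pt C).aestronglyMeasurable (.of_forall fun x => ?_))
  rw [Real.norm_of_nonneg Metric.infDist_nonneg, Pi.sub_apply, id, ← dist_eq_norm]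
  exact Metric.infDist_le_dist_of_mem hc

theorem integral_infDist_sq_le_of_subset {E : Type*} [PseudoMetricSpace E]
    [MeasurableSpace E] {μ : Measure E} {C D : Set E} (hCD : C ⊆ D) (hC : C.Nonempty)
    (hint : Integrable (fun x => Metric.infDist x C ^ 2) μ) :
    ∫ x, Metric.infDist x D ^ 2 ∂μ ≤ ∫ x, Metric.infDist x C ^ 2 ∂μ :=
  integral_mono_of_nonneg (.of_forall fun _ => by positivity) hint (.of_forall fun _ =>
    pow_le_pow_left₀ Metric.infDist_nonneg (Metric.infDist_le_infDist_of_subset hCD hC) 2)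

theorem subset_CU_of_direction_le {H : Type*} [NormedAddCommGroup H] [InnerProductSpace ℝ H]
    {X C : Set H} {x₀ : H} {k : ℕ} {w : Fin k → H} (hCX : C ⊆ X) (hx₀ : x₀ ∈ C)
    (hw : (affineSpan ℝ C).direction ≤ span ℝ (Set.range w)) : C ⊆ CU X x₀ w := by
  intro c hc
  refine ⟨⟨c - x₀, hw ?_, add_sub_cancel x₀ c⟩, hCX hc⟩
  exact AffineSubspace.vsub_mem_direction (subset_affineSpan ℝ C hc) (subset_affineSpan ℝ C hx₀)

theorem orthonormal_minimizer_is_GPCC_general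
    {H : Type*} [NormedAddCommGroup H] [InnerProductSpace ℝ H]
    [SecondCountableTopology H] [MeasurableSpace H] [BorelSpace H]
    (k : ℕ) (hdim : (k : Cardinal) ≤ Module.rank ℝ H)
    (X : Set H) (x₀ : H)
    (P : Measure H) (hP : IsProbabilityMeasure P)
    (hmom : ∫⁻ x, ‖x‖₊ ^ 2 ∂P < ⊤)
    (u : Fin k → H)
    (hmin : ∀ w : Fin k → H, Orthonormal ℝ w →
      ∫ x, Metric.infDist x (CU X x₀ u) ^ 2 ∂P ≤ ∫ x, Metric.infDist x (CU X x₀ w) ^ 2 ∂P) :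
    ∀ C : Set H, MemCC X x₀ k C →
      ∫ x, Metric.infDist x (CU X x₀ u) ^ 2 ∂P ≤ ∫ x, Metric.infDist x C ^ 2 ∂P := by
  rintro C ⟨hCne, -, hCX, -, hx₀C, hCdim⟩
  obtain ⟨w, hw, hCw⟩ :=
    (affineSpan ℝ C).direction.exists_orthonormal_span_ge_of_rank_le hdim hCdim
  calc ∫ x, Metric.infDist x (CU X x₀ u) ^ 2 ∂P
      ≤ ∫ x, Metric.infDist x (CU X x₀ w) ^ 2 ∂P := hmin w hw
    _ ≤ ∫ x, Metric.infDist x C ^ 2 ∂P :=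
      integral_infDist_sq_le_of_subset (subset_CU_of_direction_le hCX hx₀C hCw) hCne
        ((memLp_two_id_of_lintegral_nnnorm_sq_lt_top hmom).integrable_infDist_sq hx₀C)

/-- If an orthonormal family `U*` of cardinality `k` minimizes
`H_X(U) = K_X((x₀ + span U) ∩ X)` over all orthonormal families of cardinality `k`,
then `C_{U*} = (x₀ + span U*) ∩ X` minimizes `K_X` over `CC_{x₀,k}(X)`; i.e. it is a
`(k, x₀)`-global principal convex component. -/
theorem orthonormal_minimizer_is_GPCC
    {H : Type*} [NormedAddCommGroup H] [InnerProductSpace ℝ H] [CompleteSpace H]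
    [SecondCountableTopology H] [MeasurableSpace H] [BorelSpace H]
    (k : ℕ) (hk : 1 ≤ k) (hdim : (k : Cardinal) ≤ Module.rank ℝ H)
    (X : Set H) (hXcl : IsClosed X) (hXconv : Convex ℝ X)
    (x₀ : H) (hx₀ : x₀ ∈ X)
    (P : Measure H) (hP : IsProbabilityMeasure P) (hPX : P X = 1)
    (hmom : ∫⁻ x, ‖x‖₊ ^ 2 ∂P < ⊤)
    (u : Fin k → H) (hu : Orthonormal ℝ u)
    (hmin : ∀ w : Fin k → H, Orthonormal ℝ w →
      ∫ x, Metric.infDist x (CU X x₀ u) ^ 2 ∂P ≤ ∫ x, Metric.infDist x (CU X x₀ w) ^ 2 ∂P) :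
    ∀ C : Set H, MemCC X x₀ k C →
      ∫ x, Metric.infDist x (CU X x₀ u) ^ 2 ∂P ≤ ∫ x, Metric.infDist x C ^ 2 ∂P :=
  orthonormal_minimizer_is_GPCC_general k hdim X x₀ P hP hmom u hmin
end
end

section
/- Let H be a separable real Hilbert space with dim H ≥ k, X ⊆ H a closed convex set, x₀ ∈ X, and let x be an X-valued Bochner square-integrable random element (E‖x‖² < ∞). Suppose Ũ = {ũ₁,…,ũ_k} ⊆ H is an orthonormal family minimizing U ↦ E‖x − Π_{x₀+span(U)}(x)‖² over all orthonormal families U of cardinality k (equivalently, Ũ consists of orthonormal eigenvectors associated with the k largest eigenvalues of the covariance operator K y = E⟨x − x₀, y⟩(x − x₀)). If Π_{x₀+span(Ũ)}(x) ∈ X almost surely, then C_Ũ = (x₀ + span(Ũ)) ∩ X minimizes K_X(C) = E d(x, C)² over CC_{x₀,k}(X), i.e. C_Ũ is a (k, x₀)-global principal convex component. -/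
open MeasureTheory

noncomputable section

/-- The orthogonal projection onto the affine subspace `x₀ + span(w)`, for an
orthonormal family `w`: `y ↦ x₀ + ∑ i ⟨y − x₀, w i⟩ w i`. -/
noncomputable def projAff {H : Type*} [NormedAddCommGroup H] [InnerProductSpace ℝ H]
    {k : ℕ} (x₀ : H) (w : Fin k → H) (y : H) : H :=
  x₀ + ∑ i, (inner ℝ (y - x₀) (w i) : ℝ) • w i

/-!
Every `C ∈ CC_{x₀,k}(X)` lies in `x₀ + span W` for some orthonormal `W` of cardinality `k`
(enlarge the direction of the affine span of `C` to a `k`-dimensional subspace), so pointwise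
`d(x, C) ≥ ‖x − Π_{x₀+span W}(x)‖`. By minimality of `Ũ`, the expected squared residual of
`Π_{x₀+span Ũ}` is at most that of `Π_{x₀+span W}`, and since `Π_{x₀+span Ũ}(x) ∈ C_Ũ` almost
surely, `d(x, C_Ũ) ≤ ‖x − Π_{x₀+span Ũ}(x)‖`. All integrands are dominated by `‖x − x₀‖²`,
as `x₀` lies in every set involved.
-/

section

open Module Set Submodule

theorem Submodule.exists_le_finrank_eq {K V : Type*} [DivisionRing K] [AddCommGroup V]
    [Module K V] (p : Submodule K V) [FiniteDimensional K p] {k : ℕ} (hpk : finrank K p ≤ k)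
    (hk : (k : Cardinal) ≤ Module.rank K V) :
    ∃ q : Submodule K V, p ≤ q ∧ FiniteDimensional K q ∧ finrank K q = k := by
  induction k with
  | zero => exact ⟨p, le_rfl, inferInstance, by omega⟩
  | succ k ih =>
    rcases hpk.eq_or_lt with hpk | hpk
    · exact ⟨p, le_rfl, inferInstance, hpk⟩
    obtain ⟨q, hpq, hq, hqk⟩ := ih (by omega) ((Nat.cast_le.mpr k.le_succ).trans hk)
    have hq_ne_top : q ≠ ⊤ := by
      rintro rfl
      rw [← rank_top, ← finrank_eq_rank, hqk, Nat.cast_le] at hk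
      omega
    obtain ⟨v, -, hv⟩ := SetLike.exists_of_lt hq_ne_top.lt_top
    refine ⟨q ⊔ K ∙ v, hpq.trans le_sup_left, inferInstance, ?_⟩
    have hsum := finrank_sup_add_finrank_inf_eq q (K ∙ v)
    rw [(disjoint_span_singleton_of_notMem hv).eq_bot, finrank_bot,
      finrank_span_singleton (ne_of_mem_of_not_mem q.zero_mem hv).symm, hqk] at hsum
    omega

theorem Submodule.exists_orthonormal_span_eq {𝕜 E : Type*} [RCLike 𝕜] [NormedAddCommGroup E]
    [InnerProductSpace 𝕜 E] (W : Submodule 𝕜 E) [FiniteDimensional 𝕜 W] {k : ℕ}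
    (hW : finrank 𝕜 W = k) :
    ∃ w : Fin k → E, Orthonormal 𝕜 w ∧ span 𝕜 (range w) = W := by
  let b := (stdOrthonormalBasis 𝕜 W).reindex (finCongr hW)
  refine ⟨fun i => b i, b.orthonormal.comp_linearIsometry W.subtypeₗᵢ, ?_⟩
  rw [show range (fun i => (b i : E)) = W.subtype '' range b from range_comp _ _,
    ← map_span, ← b.coe_toBasis, b.toBasis.span_eq, map_top, range_subtype]

theorem integrable_sq_comp_of_le_norm_sub {E Ω : Type*} [NormedAddCommGroup E] [MeasurableSpace Ω]
    {Q : Measure Ω} [IsFiniteMeasure Q] {x : Ω → E} (hx : MemLp x 2 Q) (x₀ : E) {g : E → ℝ}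
    (hg : Continuous g) (hg0 : ∀ y, 0 ≤ g y) (hgle : ∀ y, g y ≤ ‖y - x₀‖) :
    Integrable (fun ω => g (x ω) ^ 2) Q := by
  have hdom : Integrable (fun ω => ‖x ω - x₀‖ ^ 2) Q := by
    simpa using (hx.sub (memLp_const x₀)).integrable_norm_pow two_ne_zero
  refine hdom.mono' ((hg.pow 2).comp_aestronglyMeasurable hx.aestronglyMeasurable)
    (Filter.Eventually.of_forall fun ω => ?_)
  rw [Real.norm_of_nonneg (sq_nonneg _)]
  exact pow_le_pow_left₀ (hg0 _) (hgle _) 2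

variable {H : Type*} [NormedAddCommGroup H] [InnerProductSpace ℝ H]

theorem exists_orthonormal_sub_mem_span_of_dimLE {k : ℕ}
    (hk : (k : Cardinal) ≤ Module.rank ℝ H) {C : Set H} {x₀ : H} (hx₀ : x₀ ∈ C)
    (hC : DimLE C k) :
    ∃ w : Fin k → H, Orthonormal ℝ w ∧ ∀ c ∈ C, c - x₀ ∈ span ℝ (range w) := by
  set V := (affineSpan ℝ C).direction
  have : FiniteDimensional ℝ V := by
    rw [FiniteDimensional, ← rank_lt_aleph0_iff]
    exact hC.trans_lt Cardinal.natCast_lt_aleph0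
  obtain ⟨W, hVW, hW, hWk⟩ := V.exists_le_finrank_eq (finrank_le_of_rank_le hC) hk
  obtain ⟨w, hw, hspan⟩ := W.exists_orthonormal_span_eq hWk
  refine ⟨w, hw, fun c hc => hspan ▸ hVW ?_⟩
  exact AffineSubspace.vsub_mem_direction (subset_affineSpan ℝ C hc) (subset_affineSpan ℝ C hx₀)

variable {k : ℕ} (x₀ : H)

theorem projAff_sub_mem_span (w : Fin k → H) (y : H) :
    projAff x₀ w y - x₀ ∈ span ℝ (range w) := by
  rw [projAff, add_sub_cancel_left]
  exact sum_mem fun i _ => smul_mem _ _ (subset_span ⟨i, rfl⟩)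

theorem continuous_projAff (w : Fin k → H) : Continuous (projAff x₀ w) := by
  unfold projAff
  fun_prop

theorem inner_sub_projAff_eq_zero {w : Fin k → H} (hw : Orthonormal ℝ w) (y : H) {v : H}
    (hv : v ∈ span ℝ (range w)) : inner ℝ (y - projAff x₀ w y) v = 0 := by
  induction hv using span_induction with
  | mem z hz =>
    obtain ⟨i, rfl⟩ := hz
    rw [projAff, ← sub_sub, inner_sub_left, sum_inner]
    simp [real_inner_smul_left, orthonormal_iff_ite.mp hw]
  | zero => simp
  | add a b _ _ ha hb => rw [inner_add_right, ha, hb, add_zero]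
  | smul r a _ ha => rw [real_inner_smul_right, ha, mul_zero]

theorem norm_sub_projAff_le {w : Fin k → H} (hw : Orthonormal ℝ w) (y : H) {c : H}
    (hc : c - x₀ ∈ span ℝ (range w)) : ‖y - projAff x₀ w y‖ ≤ ‖y - c‖ := by
  have hperp : inner ℝ (y - projAff x₀ w y) (projAff x₀ w y - c) = 0 := by
    refine inner_sub_projAff_eq_zero x₀ hw y ?_
    rw [← sub_sub_sub_cancel_right _ c x₀]
    exact sub_mem (projAff_sub_mem_span x₀ w y) hc
  have hpyth := norm_add_sq_eq_norm_sq_add_norm_sq_real hperp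
  rw [sub_add_sub_cancel] at hpyth
  nlinarith [norm_nonneg (y - projAff x₀ w y), norm_nonneg (y - c),
    sq_nonneg ‖projAff x₀ w y - c‖]

theorem norm_sub_projAff_le_infDist {w : Fin k → H} (hw : Orthonormal ℝ w) (y : H) {C : Set H}
    (hCne : C.Nonempty) (hC : ∀ c ∈ C, c - x₀ ∈ span ℝ (range w)) :
    ‖y - projAff x₀ w y‖ ≤ Metric.infDist y C :=
  (Metric.le_infDist hCne).2 fun c hc => by
    rw [dist_eq_norm]
    exact norm_sub_projAff_le x₀ hw y (hC c hc)

theorem infDist_CU_le_norm_sub_projAff {X : Set H} (w : Fin k → H) {y : H}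
    (hy : projAff x₀ w y ∈ X) : Metric.infDist y (CU X x₀ w) ≤ ‖y - projAff x₀ w y‖ := by
  rw [← dist_eq_norm]
  refine Metric.infDist_le_dist_of_mem ⟨⟨_, projAff_sub_mem_span x₀ w y, ?_⟩, hy⟩
  simp

end

theorem pca_solves_cpca_of_projection_mem_general
    {H : Type*} [NormedAddCommGroup H] [InnerProductSpace ℝ H]
    (k : ℕ) (hdim : (k : Cardinal) ≤ Module.rank ℝ H)
    (X : Set H)
    (x₀ : H) (hx₀ : x₀ ∈ X)
    {Ω : Type*} [MeasurableSpace Ω] (Q : Measure Ω) (hQ : IsProbabilityMeasure Q)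
    (x : Ω → H) (hx2 : MemLp x 2 Q)
    (u : Fin k → H) (hu : Orthonormal ℝ u)
    (hmin : ∀ w : Fin k → H, Orthonormal ℝ w →
      ∫ ω, ‖x ω - projAff x₀ u (x ω)‖ ^ 2 ∂Q ≤ ∫ ω, ‖x ω - projAff x₀ w (x ω)‖ ^ 2 ∂Q)
    (hproj : ∀ᵐ ω ∂Q, projAff x₀ u (x ω) ∈ X) :
    ∀ C : Set H, MemCC X x₀ k C →
      ∫ ω, Metric.infDist (x ω) (CU X x₀ u) ^ 2 ∂Q ≤
        ∫ ω, Metric.infDist (x ω) C ^ 2 ∂Q := by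
  rintro C ⟨hCne, -, -, -, hx₀C, hCdim⟩
  obtain ⟨w, hw, hCw⟩ := exists_orthonormal_sub_mem_span_of_dimLE hdim hx₀C hCdim
  have hx₀CU : x₀ ∈ CU X x₀ u := ⟨⟨0, zero_mem _, add_zero x₀⟩, hx₀⟩
  have integrable_sq {g : H → ℝ} (hg : Continuous g) (hg0 : ∀ y, 0 ≤ g y)
      (hgle : ∀ y, g y ≤ ‖y - x₀‖) := integrable_sq_comp_of_le_norm_sub hx2 x₀ hg hg0 hgle
  have integrable_proj (v : Fin k → H) (hv : Orthonormal ℝ v) :=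
    integrable_sq (continuous_id.sub (continuous_projAff x₀ v)).norm (fun _ => norm_nonneg _)
      fun y => norm_sub_projAff_le x₀ hv y (by simp)
  have integrable_infDist (S : Set H) (hS : x₀ ∈ S) :=
    integrable_sq (Metric.continuous_infDist_pt S) (fun _ => Metric.infDist_nonneg)
      fun y => dist_eq_norm y x₀ ▸ Metric.infDist_le_dist_of_mem hS
  calc ∫ ω, Metric.infDist (x ω) (CU X x₀ u) ^ 2 ∂Q
      ≤ ∫ ω, ‖x ω - projAff x₀ u (x ω)‖ ^ 2 ∂Q :=
        integral_mono_ae (integrable_infDist _ hx₀CU) (integrable_proj u hu) <| by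
          filter_upwards [hproj] with ω hω
          exact pow_le_pow_left₀ Metric.infDist_nonneg
            (infDist_CU_le_norm_sub_projAff x₀ u hω) 2
    _ ≤ ∫ ω, ‖x ω - projAff x₀ w (x ω)‖ ^ 2 ∂Q := hmin w hw
    _ ≤ ∫ ω, Metric.infDist (x ω) C ^ 2 ∂Q :=
        integral_mono (integrable_proj w hw) (integrable_infDist C hx₀C) fun ω => by
          gcongr
          exact norm_sub_projAff_le_infDist x₀ hw (x ω) hCne hCw

/-- If `Ũ` is an orthonormal family of cardinality `k` minimizing
`U ↦ E‖x − Π_{x₀+span U}(x)‖²` over orthonormal families (i.e. a standard PCA basis of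
the square-integrable `X`-valued random element `x`), and if `Π_{x₀+span Ũ}(x) ∈ X`
almost surely, then `C_Ũ = (x₀ + span Ũ) ∩ X` minimizes `K_X(C) = E d(x, C)²` over
`CC_{x₀,k}(X)`; i.e. the standard PCA solves the convex PCA problem. -/
theorem pca_solves_cpca_of_projection_mem
    {H : Type*} [NormedAddCommGroup H] [InnerProductSpace ℝ H] [CompleteSpace H]
    [SecondCountableTopology H]
    (k : ℕ) (hk : 1 ≤ k) (hdim : (k : Cardinal) ≤ Module.rank ℝ H)
    (X : Set H) (hXcl : IsClosed X) (hXconv : Convex ℝ X)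
    (x₀ : H) (hx₀ : x₀ ∈ X)
    {Ω : Type*} [MeasurableSpace Ω] (Q : Measure Ω) (hQ : IsProbabilityMeasure Q)
    (x : Ω → H) (hx2 : MemLp x 2 Q) (hxX : ∀ᵐ ω ∂Q, x ω ∈ X)
    (u : Fin k → H) (hu : Orthonormal ℝ u)
    (hmin : ∀ w : Fin k → H, Orthonormal ℝ w →
      ∫ ω, ‖x ω - projAff x₀ u (x ω)‖ ^ 2 ∂Q ≤ ∫ ω, ‖x ω - projAff x₀ w (x ω)‖ ^ 2 ∂Q)
    (hproj : ∀ᵐ ω ∂Q, projAff x₀ u (x ω) ∈ X) :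
    ∀ C : Set H, MemCC X x₀ k C →
      ∫ ω, Metric.infDist (x ω) (CU X x₀ u) ^ 2 ∂Q ≤
        ∫ ω, Metric.infDist (x ω) C ^ 2 ∂Q :=
  pca_solves_cpca_of_projection_mem_general k hdim X x₀ hx₀ Q hQ x hx2 u hu hmin hproj
end
end

section
/- Let (T, 𝒯, P) be a probability space and κ a Markov kernel from T to ℝ with ∫_T ∫_ℝ x² dκ_t(x) dP(t) < ∞. Let ν₀ ∈ W₂(ℝ) be the population Fréchet mean, characterized by F_{ν₀}⁻(y) = ∫_T F_{κ_t}⁻(y) dP(t) for a.e. y ∈ (0,1). Let (t_i)_{i≥1} be an i.i.d. sequence with law P, set ν_i = κ_{t_i}, and let ν*_n ∈ W₂(ℝ) be the empirical Fréchet mean of ν₁,…,ν_n, the unique minimizer of ν ↦ Σ_{i=1}^n d_W²(ν_i, ν), characterized by F_{ν*_n}⁻ = (1/n) Σ_{i=1}^n F_{ν_i}⁻. Then d_W(ν*_n, ν₀) → 0 almost surely as n → ∞. -/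
open MeasureTheory

noncomputable section

/-!
The quantile coupling gives `d_W(μ, ν)² ≤ ∫₀¹ (F_μ⁻ - F_ν⁻)²`, and at each level `y` the
difference `F_{ν*_n}⁻(y) - F_{ν₀}⁻(y)` is the deviation of the empirical mean of the i.i.d.
variables `F_{κ_{t_i}}⁻(y)` from its expectation. The strong law at every level, combined with
Fubini, makes this deviation tend to `0` for a.e. `y`, almost surely. Its square is dominated by
`2 · (empirical mean of the squares) + 2 · (mean)²`, whose integrals over `y` converge almost
surely by the strong law applied to the second moments of the `κ_{t_i}`; dominated convergence
with converging dominators then gives `∫₀¹ (F_{ν*_n}⁻ - F_{ν₀}⁻)² → 0`.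
-/

open Set Filter ProbabilityTheory Function
open scoped ENNReal Topology

lemma cdf'_eq_cdf_s19 (ν : Measure ℝ) [IsProbabilityMeasure ν] : cdf' ν = cdf ν :=
  funext fun x => (cdf_eq_real ν x).symm

lemma quantile_le_iff (ν : Measure ℝ) [IsProbabilityMeasure ν] {y : ℝ} (hy : y ∈ Ioo (0 : ℝ) 1)
    (a : ℝ) :
    quantile ν y ≤ a ↔ y ≤ cdf' ν a := by
  rw [quantile, cdf'_eq_cdf_s19]
  set S := {x : ℝ | y ≤ cdf ν x}
  have hne : S.Nonempty := ((tendsto_cdf_atTop ν).eventually (eventually_ge_nhds hy.2)).exists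
  have hbdd : BddBelow S := by
    obtain ⟨b, hb⟩ := ((tendsto_cdf_atBot ν).eventually (eventually_lt_nhds hy.1)).exists
    exact ⟨b, fun x hx => not_lt.1 fun hxb => (hx.trans (monotone_cdf ν hxb.le)).not_gt hb⟩
  refine ⟨fun h => ?_, fun h => csInf_le hbdd h⟩
  -- `S` is an upper set, and right-continuity of the cdf puts its infimum inside it
  have hright : ∀ᶠ x in 𝓝[>] a, y ≤ cdf ν x := eventually_nhdsWithin_of_forall fun x hx => by
    obtain ⟨s, hs, hsx⟩ := exists_lt_of_csInf_lt hne (h.trans_lt hx)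
    exact hs.trans (monotone_cdf ν hsx.le)
  exact ge_of_tendsto (((cdf ν).right_continuous a).tendsto.mono_left
    (nhdsWithin_mono _ Ioi_subset_Ici_self)) hright

/-- The quantile function, set to `0` off `(0, 1)` where `quantile` carries junk values. -/
def truncQuantile (ν : Measure ℝ) : ℝ → ℝ := (Ioo (0 : ℝ) 1).indicator (quantile ν)

lemma measurable_truncQuantile_uncurry {T : Type*} [MeasurableSpace T] {ν : T → Measure ℝ}
    [∀ t, IsProbabilityMeasure (ν t)] (hν : ∀ a, Measurable fun t => ν t (Iic a)) :
    Measurable fun p : T × ℝ => truncQuantile (ν p.1) p.2 := by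
  refine measurable_of_Iic fun a => ?_
  have hpre : (fun p : T × ℝ => truncQuantile (ν p.1) p.2) ⁻¹' Iic a =
      {p | p.2 ∈ Ioo (0 : ℝ) 1 ∧ p.2 ≤ cdf' (ν p.1) a} ∪ {p | p.2 ∉ Ioo (0 : ℝ) 1 ∧ 0 ≤ a} := by
    ext p
    by_cases hp : p.2 ∈ Ioo (0 : ℝ) 1
    · simp [truncQuantile, hp, quantile_le_iff (ν p.1) hp, -mem_Ioo]
    · simp [truncQuantile, hp, -mem_Ioo]
  rw [hpre]
  have hIoo : MeasurableSet {p : T × ℝ | p.2 ∈ Ioo (0 : ℝ) 1} := measurable_snd measurableSet_Ioo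
  exact (hIoo.inter (measurableSet_le measurable_snd
    ((hν a).ennreal_toReal.comp measurable_fst))).union (hIoo.compl.inter (.const _))

section Quantile

variable (ν : Measure ℝ) [IsProbabilityMeasure ν]

lemma measurable_truncQuantile : Measurable (truncQuantile ν) :=
  (measurable_truncQuantile_uncurry (ν := fun _ : Unit => ν) fun _ => measurable_const).comp
    (measurable_const (a := ()).prodMk measurable_id)

instance : IsProbabilityMeasure (volume.restrict (Ioo (0 : ℝ) 1)) := ⟨by simp⟩

lemma map_truncQuantile : (volume.restrict (Ioo (0 : ℝ) 1)).map (truncQuantile ν) = ν := by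
  have : IsProbabilityMeasure ((volume.restrict (Ioo (0 : ℝ) 1)).map (truncQuantile ν)) :=
    Measure.isProbabilityMeasure_map (measurable_truncQuantile ν).aemeasurable
  refine Measure.ext_of_Iic _ _ fun a => ?_
  have hpre : truncQuantile ν ⁻¹' Iic a ∩ Ioo 0 1 = Ioo 0 1 ∩ Iic (cdf ν a) := by
    ext y
    by_cases hy : y ∈ Ioo (0 : ℝ) 1
    · simp [truncQuantile, hy, quantile_le_iff ν hy, cdf'_eq_cdf_s19, -mem_Ioo]
    · simp [truncQuantile, hy, -mem_Ioo]
  rw [Measure.map_apply (measurable_truncQuantile ν) measurableSet_Iic,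
    Measure.restrict_apply' measurableSet_Ioo, hpre, ← ofReal_cdf,
    measure_congr ((ae_eq_refl _).inter Iio_ae_eq_Iic.symm), Ioo_inter_Iio, Real.volume_Ioo,
    min_eq_right (cdf_le_one ν a), sub_zero]

lemma lintegral_comp_truncQuantile {f : ℝ → ℝ≥0∞} (hf : Measurable f) :
    ∫⁻ y in Ioo (0 : ℝ) 1, f (truncQuantile ν y) = ∫⁻ x, f x ∂ν := by
  rw [← lintegral_map hf (measurable_truncQuantile ν), map_truncQuantile]

lemma lintegral_truncQuantile_sq :
    ∫⁻ y in Ioo (0 : ℝ) 1, ENNReal.ofReal (truncQuantile ν y ^ 2)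
      = ∫⁻ x, ENNReal.ofReal (x ^ 2) ∂ν :=
  lintegral_comp_truncQuantile ν (f := fun x => ENNReal.ofReal (x ^ 2)) (by fun_prop)

end Quantile

/-- Witnessed by the quantile coupling `y ↦ (F_{ν₁}⁻ y, F_{ν₂}⁻ y)`. -/
lemma iInf_coupling_cost_le_lintegral_truncQuantile (ν₁ ν₂ : Measure ℝ) [IsProbabilityMeasure ν₁]
    [IsProbabilityMeasure ν₂] :
    ⨅ π : {π : Measure (ℝ × ℝ) // IsCoupling π ν₁ ν₂}, ∫⁻ p, ENNReal.ofReal ((p.1 - p.2) ^ 2) ∂π.1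
      ≤ ∫⁻ y in Ioo (0 : ℝ) 1,
          ENNReal.ofReal ((truncQuantile ν₁ y - truncQuantile ν₂ y) ^ 2) := by
  have hpair : Measurable fun y => (truncQuantile ν₁ y, truncQuantile ν₂ y) :=
    (measurable_truncQuantile ν₁).prodMk (measurable_truncQuantile ν₂)
  set π := (volume.restrict (Ioo (0 : ℝ) 1)).map fun y => (truncQuantile ν₁ y, truncQuantile ν₂ y)
  have hπ : IsCoupling π ν₁ ν₂ :=
    ⟨Measure.isProbabilityMeasure_map hpair.aemeasurable,
      by rw [Measure.map_map measurable_fst hpair]; exact map_truncQuantile ν₁,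
      by rw [Measure.map_map measurable_snd hpair]; exact map_truncQuantile ν₂⟩
  calc _ ≤ ∫⁻ p, ENNReal.ofReal ((p.1 - p.2) ^ 2) ∂π := iInf_le_of_le ⟨π, hπ⟩ le_rfl
    _ = _ := lintegral_map (by fun_prop) hpair

lemma tendsto_Wdist_of_tendsto_lintegral_truncQuantile {μ : ℕ → Measure ℝ} {ν : Measure ℝ}
    [IsProbabilityMeasure ν] (hμ : ∀ᶠ n in atTop, IsProbabilityMeasure (μ n))
    (h : Tendsto (fun n => ∫⁻ y in Ioo (0 : ℝ) 1,
      ENNReal.ofReal ((truncQuantile (μ n) y - truncQuantile ν y) ^ 2)) atTop (𝓝 0)) :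
    Tendsto (fun n => Wdist (μ n) ν) atTop (𝓝 0) := by
  have hsqrt := (Real.continuous_sqrt.tendsto 0).comp
    ((ENNReal.tendsto_toReal ENNReal.zero_ne_top).comp h)
  rw [Real.sqrt_zero] at hsqrt
  refine tendsto_of_tendsto_of_tendsto_of_le_of_le' tendsto_const_nhds hsqrt
    (.of_forall fun n => Real.sqrt_nonneg _) ?_
  filter_upwards [hμ, h.eventually (eventually_lt_nhds ENNReal.zero_lt_top)] with n hμn hfin
  exact Real.sqrt_le_sqrt
    (ENNReal.toReal_mono hfin.ne (iInf_coupling_cost_le_lintegral_truncQuantile (μ n) ν))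

theorem tendsto_lintegral_zero_of_le_of_tendsto_lintegral {α : Type*} [MeasurableSpace α]
    {μ : Measure α} {f g : ℕ → α → ℝ≥0∞} {G : α → ℝ≥0∞}
    (hf : ∀ n, AEMeasurable (f n) μ) (hg : ∀ n, AEMeasurable (g n) μ) (hfg : ∀ n, f n ≤ᵐ[μ] g n)
    (hf_lim : ∀ᵐ x ∂μ, Tendsto (fun n => f n x) atTop (𝓝 0))
    (hg_lim : ∀ᵐ x ∂μ, Tendsto (fun n => g n x) atTop (𝓝 (G x)))
    (hG_lim : Tendsto (fun n => ∫⁻ x, g n x ∂μ) atTop (𝓝 (∫⁻ x, G x ∂μ)))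
    (hG : ∫⁻ x, G x ∂μ ≠ ∞) :
    Tendsto (fun n => ∫⁻ x, f n x ∂μ) atTop (𝓝 0) := by
  have hsplit : ∀ n, ∫⁻ x, g n x ∂μ = ∫⁻ x, g n x - f n x ∂μ + ∫⁻ x, f n x ∂μ := fun n => by
    rw [← lintegral_add_right' _ (hf n)]
    exact lintegral_congr_ae ((hfg n).mono fun x hx => (tsub_add_cancel_of_le hx).symm)
  -- Fatou's lemma for `g n - f n`, squeezed against the convergent integrals of `g n`
  have hfatou : ∫⁻ x, G x ∂μ ≤ liminf (fun n => ∫⁻ x, g n x - f n x ∂μ) atTop := calc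
    _ = ∫⁻ x, liminf (fun n => g n x - f n x) atTop ∂μ := by
      refine lintegral_congr_ae ?_
      filter_upwards [hf_lim, hg_lim] with x hfx hgx
      simpa using ((ENNReal.Tendsto.sub hgx hfx (.inr ENNReal.zero_ne_top)).liminf_eq).symm
    _ ≤ _ := lintegral_liminf_le' fun n => (hg n).sub (hf n)
  have hdiff : Tendsto (fun n => ∫⁻ x, g n x - f n x ∂μ) atTop (𝓝 (∫⁻ x, G x ∂μ)) :=
    tendsto_of_le_liminf_of_limsup_le hfatou <| hG_lim.limsup_eq ▸
      limsup_le_limsup (.of_forall fun n => lintegral_mono fun x => tsub_le_self)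
  have hlim := ENNReal.Tendsto.sub hG_lim hdiff (.inl hG)
  rw [tsub_self] at hlim
  refine hlim.congr' ?_
  filter_upwards [hdiff.eventually (eventually_ne_nhds hG)] with n hn
  rw [hsplit n, ENNReal.add_sub_cancel_left hn]

lemma sq_avg_sub_le (n : ℕ) (a : ℕ → ℝ) (m : ℝ) :
    ((∑ i ∈ Finset.range n, a i) / n - m) ^ 2
      ≤ 2 * ((∑ i ∈ Finset.range n, a i ^ 2) / n) + 2 * m ^ 2 := by
  have hjensen := sum_div_card_sq_le_sum_sq_div_card (s := Finset.range n) (f := a)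
  rw [Finset.card_range] at hjensen
  nlinarith [sq_nonneg ((∑ i ∈ Finset.range n, a i) / n + m)]

lemma lintegral_ofReal_avg {α : Type*} [MeasurableSpace α] {μ : Measure α} {h : ℕ → α → ℝ}
    (hh : ∀ i, Measurable (h i)) (h_nonneg : ∀ i x, 0 ≤ h i x) {n : ℕ} (hn : 1 ≤ n) :
    ∫⁻ x, ENNReal.ofReal ((∑ i ∈ Finset.range n, h i x) / n) ∂μ
      = (∑ i ∈ Finset.range n, ∫⁻ x, ENNReal.ofReal (h i x) ∂μ) / n := by
  have hn' : (0 : ℝ) < n := by exact_mod_cast hn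
  simp_rw [ENNReal.ofReal_div_of_pos hn', ENNReal.ofReal_natCast,
    ENNReal.ofReal_sum_of_nonneg fun i _ => h_nonneg i _, div_eq_mul_inv]
  rw [lintegral_mul_const _ (Finset.measurable_sum _ fun i _ => (hh i).ennreal_ofReal),
    lintegral_finsetSum _ fun i _ => (hh i).ennreal_ofReal]

theorem tendsto_lintegral_sq_avg_sub {α : Type*} [MeasurableSpace α] {μ : Measure α}
    {q : ℕ → α → ℝ} {m s : α → ℝ} (hq : ∀ i, Measurable (q i)) (hm : Measurable m)
    (hs : Measurable s)
    (hq_lim : ∀ᵐ x ∂μ,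
      Tendsto (fun n : ℕ => (∑ i ∈ Finset.range n, q i x) / n) atTop (𝓝 (m x)))
    (hq2_lim : ∀ᵐ x ∂μ,
      Tendsto (fun n : ℕ => (∑ i ∈ Finset.range n, q i x ^ 2) / n) atTop (𝓝 (s x)))
    (hint_lim : Tendsto
      (fun n : ℕ => (∑ i ∈ Finset.range n, ∫⁻ x, ENNReal.ofReal (q i x ^ 2) ∂μ) / n) atTop
      (𝓝 (∫⁻ x, ENNReal.ofReal (s x) ∂μ)))
    (hs_fin : ∫⁻ x, ENNReal.ofReal (s x) ∂μ ≠ ∞) (hm_fin : ∫⁻ x, ENNReal.ofReal (m x ^ 2) ∂μ ≠ ∞) :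
    Tendsto (fun n : ℕ => ∫⁻ x, ENNReal.ofReal (((∑ i ∈ Finset.range n, q i x) / n - m x) ^ 2) ∂μ)
      atTop (𝓝 0) := by
  have hB : ∀ n : ℕ, Measurable fun x => (∑ i ∈ Finset.range n, q i x ^ 2) / n := fun n =>
    (Finset.measurable_sum _ fun i _ => (hq i).pow_const 2).div_const _
  have hlin (u : α → ℝ) (hu : Measurable u) :
      ∫⁻ x, 2 * ENNReal.ofReal (u x) + 2 * ENNReal.ofReal (m x ^ 2) ∂μ
        = 2 * ∫⁻ x, ENNReal.ofReal (u x) ∂μ + 2 * ∫⁻ x, ENNReal.ofReal (m x ^ 2) ∂μ := by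
    rw [lintegral_add_left (hu.ennreal_ofReal.const_mul 2), lintegral_const_mul _ hu.ennreal_ofReal,
      lintegral_const_mul _ (hm.pow_const 2).ennreal_ofReal]
  refine tendsto_lintegral_zero_of_le_of_tendsto_lintegral
    (g := fun n x => 2 * ENNReal.ofReal ((∑ i ∈ Finset.range n, q i x ^ 2) / n)
      + 2 * ENNReal.ofReal (m x ^ 2))
    (G := fun x => 2 * ENNReal.ofReal (s x) + 2 * ENNReal.ofReal (m x ^ 2))
    (fun n => (((Finset.measurable_sum _ fun i _ => hq i).div_const _).sub hm).pow_const 2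
      |>.ennreal_ofReal.aemeasurable)
    (fun n => ((hB n).ennreal_ofReal.const_mul 2).add
      ((hm.pow_const 2).ennreal_ofReal.const_mul 2) |>.aemeasurable)
    (fun n => .of_forall fun x => ?_) ?_ ?_ ?_ ?_
  · refine (ENNReal.ofReal_le_ofReal (sq_avg_sub_le n (q · x) (m x))).trans_eq ?_
    rw [ENNReal.ofReal_add (by positivity) (by positivity), ENNReal.ofReal_mul zero_le_two,
      ENNReal.ofReal_mul zero_le_two, ENNReal.ofReal_ofNat]
  · filter_upwards [hq_lim] with x hx
    simpa using ENNReal.tendsto_ofReal ((hx.sub_const (m x)).pow 2)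
  · filter_upwards [hq2_lim] with x hx
    exact (ENNReal.Tendsto.const_mul (ENNReal.tendsto_ofReal hx)
      (.inr ENNReal.ofNat_ne_top)).add_const _
  · rw [hlin s hs]
    refine ((ENNReal.Tendsto.const_mul hint_lim (.inr ENNReal.ofNat_ne_top)).add_const _).congr' ?_
    filter_upwards [eventually_ge_atTop 1] with n hn
    rw [hlin _ (hB n), lintegral_ofReal_avg (fun i => (hq i).pow_const 2)
      (fun i x => sq_nonneg _) hn]
  · rw [hlin s hs]
    exact ENNReal.add_ne_top.2 ⟨ENNReal.mul_ne_top ENNReal.ofNat_ne_top hs_fin,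
      ENNReal.mul_ne_top ENNReal.ofNat_ne_top hm_fin⟩

section StrongLaw

variable {T Θ : Type*} [MeasurableSpace T] [MeasurableSpace Θ] {P : Measure T} {Q : Measure Θ}
  {ts : ℕ → Θ → T}

theorem strong_law_ae_comp (hmeas : ∀ i, Measurable (ts i))
    (hindep : Pairwise fun i j => IndepFun (ts i) (ts j) Q) (hlaw : ∀ i, Q.map (ts i) = P)
    {u : T → ℝ} (hu : Measurable u) (hint : Integrable u P) :
    ∀ᵐ ω ∂Q, Tendsto (fun n : ℕ => (∑ i ∈ Finset.range n, u (ts i ω)) / n) atTop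
      (𝓝 (∫ t, u t ∂P)) := by
  have hident : ∀ i, IdentDistrib (ts i) (ts 0) Q Q := fun i =>
    ⟨(hmeas i).aemeasurable, (hmeas 0).aemeasurable, by rw [hlaw, hlaw]⟩
  have hmean : ∫ ω, u (ts 0 ω) ∂Q = ∫ t, u t ∂P := by
    rw [← hlaw 0, integral_map (hmeas 0).aemeasurable hu.aestronglyMeasurable]
  rw [← hmean]
  exact strong_law_ae_real (fun i => u ∘ ts i)
    ((hlaw 0 ▸ hint : Integrable u (Q.map (ts 0))).comp_measurable (hmeas 0))
    (fun i j hij => (hindep hij).comp hu hu) fun i => (hident i).comp hu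

theorem strong_law_ae_ennreal (hmeas : ∀ i, Measurable (ts i))
    (hindep : Pairwise fun i j => IndepFun (ts i) (ts j) Q) (hlaw : ∀ i, Q.map (ts i) = P)
    {u : T → ℝ≥0∞} (hu : Measurable u) (hfin : ∫⁻ t, u t ∂P ≠ ∞) :
    ∀ᵐ ω ∂Q, Tendsto (fun n : ℕ => (∑ i ∈ Finset.range n, u (ts i ω)) / n) atTop
      (𝓝 (∫⁻ t, u t ∂P)) := by
  have hfinite : ∀ᵐ ω ∂Q, ∀ i, u (ts i ω) ≠ ∞ := ae_all_iff.2 fun i =>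
    ae_of_ae_map (hmeas i).aemeasurable <|
      (hlaw i).symm ▸ (ae_lt_top hu hfin).mono fun _ => ne_of_lt
  filter_upwards [strong_law_ae_comp hmeas hindep hlaw hu.ennreal_toReal
    (integrable_toReal_of_lintegral_ne_top hu.aemeasurable hfin), hfinite] with ω hω hω_fin
  rw [integral_toReal hu.aemeasurable (ae_lt_top hu hfin)] at hω
  refine (ENNReal.ofReal_toReal hfin ▸ ENNReal.tendsto_ofReal hω).congr' ?_
  filter_upwards [eventually_ge_atTop 1] with n hn
  rw [ENNReal.ofReal_div_of_pos (by exact_mod_cast hn), ENNReal.ofReal_natCast,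
    ENNReal.ofReal_sum_of_nonneg fun i _ => ENNReal.toReal_nonneg]
  simp only [ENNReal.ofReal_toReal (hω_fin _)]

theorem ae_ae_tendsto_avg {α : Type*} [MeasurableSpace α] {μ : Measure α} [SFinite μ]
    [SFinite P] [SFinite Q] (hmeas : ∀ i, Measurable (ts i))
    (hindep : Pairwise fun i j => IndepFun (ts i) (ts j) Q) (hlaw : ∀ i, Q.map (ts i) = P)
    {F : T → α → ℝ} (hF : Measurable (uncurry F))
    (hint : ∀ᵐ y ∂μ, Integrable (fun t => F t y) P) :
    ∀ᵐ ω ∂Q, ∀ᵐ y ∂μ, Tendsto (fun n : ℕ => (∑ i ∈ Finset.range n, F (ts i ω) y) / n) atTop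
      (𝓝 (∫ t, F t y ∂P)) := by
  refine (Measure.ae_ae_comm (measurableSet_tendsto_fun
    (f := fun n (x : α × Θ) => (∑ i ∈ Finset.range n, F (ts i x.2) x.1) / n)
    (g := fun x => ∫ t, F t x.1 ∂P) (fun n => ?_) ?_)).1 ?_
  · exact (Finset.measurable_sum _ fun i _ =>
      hF.comp (((hmeas i).comp measurable_snd).prodMk measurable_fst)).div_const _
  · exact hF.stronglyMeasurable.integral_prod_left'.measurable.comp measurable_fst
  · filter_upwards [hint] with y hy
    exact strong_law_ae_comp hmeas hindep hlaw (hF.comp (measurable_id.prodMk measurable_const)) hy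

end StrongLaw

lemma truncQuantile_eq_avg {μ : Measure ℝ} {ν : ℕ → Measure ℝ} {n : ℕ}
    (h : ∀ y ∈ Ioo (0 : ℝ) 1, quantile μ y = (∑ i ∈ Finset.range n, quantile (ν i) y) / n) :
    truncQuantile μ = fun y => (∑ i ∈ Finset.range n, truncQuantile (ν i) y) / n := by
  funext y
  by_cases hy : y ∈ Ioo (0 : ℝ) 1
  · simp [truncQuantile, hy, h y hy, -mem_Ioo]
  · simp [truncQuantile, hy, -mem_Ioo]

lemma truncQuantile_ae_eq_integral {T : Type*} [MeasurableSpace T] {P : Measure T}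
    {μ : Measure ℝ} {ν : T → Measure ℝ}
    (h : ∀ᵐ y ∂(volume.restrict (Ioo (0 : ℝ) 1)), quantile μ y = ∫ t, quantile (ν t) y ∂P) :
    truncQuantile μ =ᵐ[volume.restrict (Ioo (0 : ℝ) 1)] fun y => ∫ t, truncQuantile (ν t) y ∂P := by
  filter_upwards [h, ae_restrict_mem measurableSet_Ioo] with y hy hy01
  simp [truncQuantile, hy01, hy, -mem_Ioo]

section Kernel

variable {T : Type*} [MeasurableSpace T] (κ : Kernel T ℝ) [IsMarkovKernel κ] (P : Measure T)

lemma measurable_truncQuantile_kernel : Measurable (uncurry fun t => truncQuantile (κ t)) :=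
  measurable_truncQuantile_uncurry fun _ => κ.measurable_coe measurableSet_Iic

lemma lintegral_lintegral_truncQuantile_sq [SFinite P] :
    ∫⁻ y in Ioo (0 : ℝ) 1, ∫⁻ t, ENNReal.ofReal (truncQuantile (κ t) y ^ 2) ∂P
      = ∫⁻ t, ∫⁻ x, ENNReal.ofReal (x ^ 2) ∂κ t ∂P := by
  rw [lintegral_lintegral_swap (((measurable_truncQuantile_kernel κ).comp measurable_swap).pow_const
    2).ennreal_ofReal.aemeasurable]
  exact lintegral_congr fun t => lintegral_truncQuantile_sq (κ t)

lemma ae_memLp_truncQuantile [SFinite P]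
    (hmom : ∫⁻ t, ∫⁻ x, ENNReal.ofReal (x ^ 2) ∂κ t ∂P ≠ ∞) :
    ∀ᵐ y ∂(volume.restrict (Ioo (0 : ℝ) 1)), MemLp (fun t => truncQuantile (κ t) y) 2 P := by
  have hfin : ∀ᵐ y ∂(volume.restrict (Ioo (0 : ℝ) 1)),
      ∫⁻ t, ENNReal.ofReal (truncQuantile (κ t) y ^ 2) ∂P < ∞ :=
    ae_lt_top ((measurable_truncQuantile_kernel κ).pow_const 2).ennreal_ofReal.lintegral_prod_left'
      (by rwa [lintegral_lintegral_truncQuantile_sq])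
  filter_upwards [hfin] with y hy
  have hm : AEStronglyMeasurable (fun t => truncQuantile (κ t) y) P :=
    ((measurable_truncQuantile_kernel κ).comp
      (measurable_id.prodMk measurable_const)).aestronglyMeasurable
  refine (memLp_two_iff_integrable_sq hm).2 ⟨hm.pow 2, ?_⟩
  rwa [hasFiniteIntegral_iff_ofReal (.of_forall fun t => sq_nonneg _)]

lemma lintegral_ofReal_integral_truncQuantile_sq [SFinite P]
    (hmom : ∫⁻ t, ∫⁻ x, ENNReal.ofReal (x ^ 2) ∂κ t ∂P ≠ ∞) :
    ∫⁻ y in Ioo (0 : ℝ) 1, ENNReal.ofReal (∫ t, truncQuantile (κ t) y ^ 2 ∂P)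
      = ∫⁻ t, ∫⁻ x, ENNReal.ofReal (x ^ 2) ∂κ t ∂P := by
  rw [← lintegral_lintegral_truncQuantile_sq]
  refine lintegral_congr_ae ?_
  filter_upwards [ae_memLp_truncQuantile κ P hmom] with y hy
  exact ofReal_integral_eq_lintegral_ofReal hy.integrable_sq (.of_forall fun t => sq_nonneg _)

end Kernel

theorem empirical_frechet_mean_consistent_general
    {T : Type*} [MeasurableSpace T] (P : Measure T)
    (κ : ProbabilityTheory.Kernel T ℝ) (hκ : ProbabilityTheory.IsMarkovKernel κ)
    (hmom : ∫⁻ t, ∫⁻ x, ENNReal.ofReal (x ^ 2) ∂(κ t) ∂P < ⊤)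
    (ν₀ : Measure ℝ) (hν₀ : MemW2 ν₀)
    (hq0 : ∀ᵐ y ∂(volume.restrict (Set.Ioo (0 : ℝ) 1)),
      quantile ν₀ y = ∫ t, quantile (κ t) y ∂P)
    {Θ : Type*} [MeasurableSpace Θ] (Q : Measure Θ) (hQ : IsProbabilityMeasure Q)
    (ts : ℕ → Θ → T) (hmeas : ∀ i, Measurable (ts i))
    (hindep : ProbabilityTheory.iIndepFun ts Q)
    (hlaw : ∀ i, Measure.map (ts i) Q = P)
    (νsn : ℕ → Θ → Measure ℝ)
    (hνsn : ∀ n : ℕ, 1 ≤ n → ∀ ω, MemW2 (νsn n ω) ∧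
      ∀ y ∈ Set.Ioo (0 : ℝ) 1,
        quantile (νsn n ω) y = (∑ i ∈ Finset.range n, quantile (κ (ts i ω)) y) / n) :
    ∀ᵐ ω ∂Q, Filter.Tendsto (fun n => Wdist (νsn n ω) ν₀) Filter.atTop (nhds 0) := by
  have := hν₀.1
  have : IsProbabilityMeasure P :=
    hlaw 0 ▸ Measure.isProbabilityMeasure_map (hmeas 0).aemeasurable
  have hpair : Pairwise fun i j => IndepFun (ts i) (ts j) Q := fun i j hij => hindep.indepFun hij
  have hq := measurable_truncQuantile_kernel κ
  have hL2 := ae_memLp_truncQuantile κ P hmom.ne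
  have hmean := truncQuantile_ae_eq_integral hq0
  filter_upwards
    [ae_ae_tendsto_avg hmeas hpair hlaw hq (hL2.mono fun _ h => h.integrable one_le_two),
    ae_ae_tendsto_avg hmeas hpair hlaw (hq.pow_const 2) (hL2.mono fun _ h => h.integrable_sq),
    strong_law_ae_ennreal hmeas hpair hlaw (Measurable.lintegral_kernel (κ := κ)
      (f := fun x => ENNReal.ofReal (x ^ 2)) (by fun_prop)) hmom.ne] with ω hq_lim hq2_lim hM_lim
  refine tendsto_Wdist_of_tendsto_lintegral_truncQuantile
    ((eventually_ge_atTop 1).mono fun n hn => (hνsn n hn ω).1.1) ?_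
  refine (tendsto_lintegral_sq_avg_sub (m := fun y => ∫ t, truncQuantile (κ t) y ∂P)
    (s := fun y => ∫ t, truncQuantile (κ t) y ^ 2 ∂P)
    (fun i => measurable_truncQuantile (κ (ts i ω)))
    hq.stronglyMeasurable.integral_prod_left'.measurable
    (hq.pow_const 2).stronglyMeasurable.integral_prod_left'.measurable hq_lim hq2_lim
    (by simpa only [lintegral_truncQuantile_sq,
      lintegral_ofReal_integral_truncQuantile_sq κ P hmom.ne] using hM_lim)
    (by rw [lintegral_ofReal_integral_truncQuantile_sq κ P hmom.ne]; exact hmom.ne) ?_).congr' ?_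
  · refine (lintegral_congr_ae ?_).trans_ne ((lintegral_truncQuantile_sq ν₀).trans_ne hν₀.2.ne)
    filter_upwards [hmean] with y hy
    rw [hy]
  · filter_upwards [eventually_ge_atTop 1] with n hn
    refine lintegral_congr_ae ?_
    filter_upwards [hmean] with y hy
    rw [truncQuantile_eq_avg (hνsn n hn ω).2, hy]

/-- Consistency of the empirical Fréchet mean: if `ν₁ = κ_{t_1}, ν₂ = κ_{t_2}, …` are
sampled from a Markov kernel `κ` via an i.i.d. sequence `(t_i)` of law `P`, and
`ν*_n` is the empirical Fréchet mean of `ν₁, …, ν_n` (characterized by quantile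
averaging), then `d_W(ν*_n, ν₀) → 0` almost surely, where `ν₀` is the population
Fréchet mean (characterized by `F_{ν₀}⁻(y) = ∫ F_{κ_t}⁻(y) dP(t)` a.e. on `(0,1)`). -/
theorem empirical_frechet_mean_consistent
    {T : Type*} [MeasurableSpace T] (P : Measure T) (hP : IsProbabilityMeasure P)
    (κ : ProbabilityTheory.Kernel T ℝ) (hκ : ProbabilityTheory.IsMarkovKernel κ)
    (hmom : ∫⁻ t, ∫⁻ x, ENNReal.ofReal (x ^ 2) ∂(κ t) ∂P < ⊤)
    (ν₀ : Measure ℝ) (hν₀ : MemW2 ν₀)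
    (hq0 : ∀ᵐ y ∂(volume.restrict (Set.Ioo (0 : ℝ) 1)),
      quantile ν₀ y = ∫ t, quantile (κ t) y ∂P)
    {Θ : Type*} [MeasurableSpace Θ] (Q : Measure Θ) (hQ : IsProbabilityMeasure Q)
    (ts : ℕ → Θ → T) (hmeas : ∀ i, Measurable (ts i))
    (hindep : ProbabilityTheory.iIndepFun ts Q)
    (hlaw : ∀ i, Measure.map (ts i) Q = P)
    (νsn : ℕ → Θ → Measure ℝ)
    (hνsn : ∀ n : ℕ, 1 ≤ n → ∀ ω, MemW2 (νsn n ω) ∧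
      ∀ y ∈ Set.Ioo (0 : ℝ) 1,
        quantile (νsn n ω) y = (∑ i ∈ Finset.range n, quantile (κ (ts i ω)) y) / n) :
    ∀ᵐ ω ∂Q, Filter.Tendsto (fun n => Wdist (νsn n ω) ν₀) Filter.atTop (nhds 0) :=
  empirical_frechet_mean_consistent_general P κ hκ hmom ν₀ hν₀ hq0 Q hQ ts hmeas hindep hlaw νsn
    hνsn
end
end
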